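/- arXiv:1206.1292 — 2 statements merged into one kernel-verified Lean document; each statement's English description precedes it below -/
import Mathlib

section
/- Let Σ_{k∈ℤ} |k|^s |V_k| < ∞ for some s > 0 and let V^{(p)}(z) = Σ_{|k|≤p} V_k z^k be the truncated Fourier series. Then for z on the circle |z| = 1 + 3γ (log p)/p with 0 < 3γ < s − 1/2, the truncations are uniformly bounded: sup_p sup_{|z|=1±3γ log p/p} |V^{(p)}(z)| < ∞. -/
/-!
Write `x = 3γ log p / p` and `c = s / (3γ) > 1`. Once `s log p / p = c x ≤ c - 1`, both radii
`r = 1 ± x` satisfy `max r r⁻¹ ≤ exp (c x)`, the margin `c > 1` absorbing the second-order loss in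
`(1 - x)⁻¹`. Since `|k| log p / p ≤ log |k| + 1` for `1 ≤ |k| ≤ p`, this gives
`max r r⁻¹ ^ |k| ≤ exp (s |k| log p / p) ≤ e^s |k|^s`, so all these truncations are bounded by
`‖V₀‖ + e^s Σ |k|^s ‖V_k‖`; the finitely many remaining `p` are bounded one at a time.
-/

open Real Filter Topology Finset

theorem zpow_le_max_inv_pow_natAbs {K : Type*} [Field K] [LinearOrder K] [IsStrictOrderedRing K]
    {a : K} (ha : 0 ≤ a) (k : ℤ) : a ^ k ≤ max a a⁻¹ ^ k.natAbs := by
  obtain ⟨n, rfl | rfl⟩ := Int.eq_nat_or_neg k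
  · rw [zpow_natCast, Int.natAbs_natCast]
    exact pow_le_pow_left₀ ha (le_max_left _ _) n
  · rw [zpow_neg, zpow_natCast, Int.natAbs_neg, Int.natAbs_natCast, ← inv_pow]
    exact pow_le_pow_left₀ (inv_nonneg.2 ha) (le_max_right _ _) n

theorem norm_sum_mul_zpow_le {𝕜 : Type*} [NormedField 𝕜] (V : ℤ → 𝕜) (t : Finset ℤ) (z : 𝕜) :
    ‖∑ k ∈ t, V k * z ^ k‖ ≤ ∑ k ∈ t, ‖V k‖ * max ‖z‖ ‖z‖⁻¹ ^ k.natAbs := by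
  refine (norm_sum_le _ _).trans (sum_le_sum fun k _ => ?_)
  rw [norm_mul, norm_zpow]
  exact mul_le_mul_of_nonneg_left (zpow_le_max_inv_pow_natAbs (norm_nonneg z) k) (norm_nonneg _)

theorem max_self_inv_le_exp_mul {c x r : ℝ} (hc : 1 ≤ c) (hx : 0 ≤ x) (hcx : c * x ≤ c - 1)
    (hr : r = 1 + x ∨ r = 1 - x) : max r r⁻¹ ≤ exp (c * x) := by
  have hexp : 1 + c * x ≤ exp (c * x) := by linarith [add_one_le_exp (c * x)]
  have hcx0 : 0 ≤ c * x := by positivity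
  rcases hr with rfl | rfl
  · exact max_le (by nlinarith) ((inv_le_one_of_one_le₀ (by linarith)).trans (by linarith))
  · have hx1 : 0 < 1 - x := by nlinarith
    -- `(1 - x) * (1 + c x) = 1 + x * (c - 1 - c x) ≥ 1`
    have hinv : (1 - x)⁻¹ ≤ 1 + c * x := by
      rw [inv_le_iff_one_le_mul₀ hx1]; nlinarith
    exact max_le (by linarith) (hinv.trans hexp)

theorem mul_log_div_le_log_add_one {n p : ℝ} (hn : 1 ≤ n) (hnp : n ≤ p) :
    n * log p / p ≤ log n + 1 := by
  have hn0 : 0 < n := by linarith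
  have hp0 : 0 < p := by linarith
  have hlog : log (p / n) ≤ p / n - 1 := log_le_sub_one_of_pos (by positivity)
  have key : n * log p ≤ n * log n + p - n := by
    have := mul_le_mul_of_nonneg_left hlog hn0.le
    rw [log_div hp0.ne' hn0.ne', mul_sub, mul_sub, mul_div_cancel₀ _ hn0.ne', mul_one] at this
    linarith
  rw [div_le_iff₀ hp0]
  nlinarith [mul_le_mul_of_nonneg_right hnp (log_nonneg hn)]

theorem exp_mul_log_div_le {n p s : ℝ} (hs : 0 ≤ s) (hn : 1 ≤ n) (hnp : n ≤ p) :
    exp (n * (s * log p / p)) ≤ exp s * n ^ s := by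
  calc exp (n * (s * log p / p)) = exp (s * (n * log p / p)) := by ring_nf
    _ ≤ exp (s * (log n + 1)) :=
      exp_le_exp.2 (mul_le_mul_of_nonneg_left (mul_log_div_le_log_add_one hn hnp) hs)
    _ = exp s * n ^ s := by
      rw [rpow_def_of_pos (by linarith), ← exp_add]; ring_nf

theorem max_self_inv_pow_natAbs_le {s c x r : ℝ} {p : ℕ} (hs : 0 ≤ s) (hc : 1 ≤ c) (hx : 0 ≤ x)
    (hcx : c * x = s * log p / p) (hcx1 : c * x ≤ c - 1) (hr : r = 1 + x ∨ r = 1 - x)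
    {k : ℤ} (hk : k ≠ 0) (hkp : k.natAbs ≤ p) :
    max r r⁻¹ ^ k.natAbs ≤ exp s * |(k : ℝ)| ^ s := by
  have hr0 : 0 ≤ r := by rcases hr with rfl | rfl <;> nlinarith
  have hk1 : (1 : ℝ) ≤ k.natAbs := by exact_mod_cast Int.natAbs_pos.2 hk
  calc max r r⁻¹ ^ k.natAbs ≤ exp (c * x) ^ k.natAbs :=
        pow_le_pow_left₀ (le_max_of_le_left hr0) (max_self_inv_le_exp_mul hc hx hcx1 hr) _
    _ = exp (k.natAbs * (s * log p / p)) := by rw [← exp_nat_mul, hcx]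
    _ ≤ exp s * (k.natAbs : ℝ) ^ s := exp_mul_log_div_le hs hk1 (by exact_mod_cast hkp)
    _ = exp s * |(k : ℝ)| ^ s := by rw [Nat.cast_natAbs, Int.cast_abs]

theorem sum_norm_mul_pow_natAbs_le {E : Type*} [SeminormedAddGroup E] {V : ℤ → E} {s B ρ : ℝ}
    (hV : Summable fun k : ℤ => |(k : ℝ)| ^ s * ‖V k‖) (hB : 0 ≤ B) {t : Finset ℤ} (h0 : 0 ∈ t)
    (hρ : ∀ k ∈ t, k ≠ 0 → ρ ^ k.natAbs ≤ B * |(k : ℝ)| ^ s) :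
    ∑ k ∈ t, ‖V k‖ * ρ ^ k.natAbs ≤ ‖V 0‖ + B * ∑' k : ℤ, |(k : ℝ)| ^ s * ‖V k‖ := by
  have hnonneg : ∀ k : ℤ, 0 ≤ |(k : ℝ)| ^ s * ‖V k‖ := fun k => by positivity
  rw [← add_sum_erase t _ h0, Int.natAbs_zero, pow_zero, mul_one]
  gcongr
  calc ∑ k ∈ t.erase 0, ‖V k‖ * ρ ^ k.natAbs ≤ ∑ k ∈ t.erase 0, B * (|(k : ℝ)| ^ s * ‖V k‖) := by
        refine sum_le_sum fun k hk => ?_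
        obtain ⟨hk0, hkt⟩ := mem_erase.1 hk
        nlinarith [hρ k hkt hk0, norm_nonneg (V k)]
    _ ≤ B * ∑' k : ℤ, |(k : ℝ)| ^ s * ‖V k‖ := by
        rw [← mul_sum]
        exact mul_le_mul_of_nonneg_left (hV.sum_le_tsum _ fun k _ => hnonneg k) hB

theorem tendsto_mul_log_div_atTop (s : ℝ) :
    Tendsto (fun p : ℕ => s * log p / p) atTop (𝓝 0) := by
  have h := (tendsto_pow_log_div_mul_add_atTop 1 0 1 one_ne_zero).comp tendsto_natCast_atTop_atTop
  simpa [mul_div_assoc] using h.const_mul s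

/-- Uniform bound on the truncated Fourier series `V^{(p)}(z) = Σ_{|k|≤p} V_k z^k` on the
circles `|z| = 1 ± 3γ log p / p`, given `Σ |k|^s |V_k| < ∞` and `0 < 3γ < s − 1/2`. -/
theorem truncation_uniform_bound (V : ℤ → ℂ) (s γ : ℝ)
    (hs : Summable fun k : ℤ => |(k : ℝ)| ^ s * ‖V k‖)
    (hγ0 : 0 < γ) (hγ : 3 * γ < s - 1/2) :
    ∃ C : ℝ, ∀ p : ℕ, 2 ≤ p → ∀ z : ℂ,
      (‖z‖ = 1 + 3 * γ * Real.log p / p ∨ ‖z‖ = 1 - 3 * γ * Real.log p / p) →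
      ‖∑ k ∈ Finset.Icc (-(p : ℤ)) (p : ℤ), V k * z ^ k‖ ≤ C := by
  set x : ℕ → ℝ := fun p => 3 * γ * log p / p
  set c := s / (3 * γ)
  have hc : 1 < c := (one_lt_div (by positivity)).2 (by linarith)
  let M (p : ℕ) (r : ℝ) := ∑ k ∈ Icc (-(p : ℤ)) p, ‖V k‖ * max r r⁻¹ ^ k.natAbs
  have hM : ∀ᶠ p in atTop, max (M p (1 + x p)) (M p (1 - x p)) ≤
      ‖V 0‖ + exp s * ∑' k : ℤ, |(k : ℝ)| ^ s * ‖V k‖ := by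
    filter_upwards [(tendsto_mul_log_div_atTop s).eventually_le_const (sub_pos.2 hc)] with p hp
    have hx : 0 ≤ x p := by positivity
    have hcx : c * x p = s * log p / p := by simp only [x, c]; field_simp
    have hM_le : ∀ r, (r = 1 + x p ∨ r = 1 - x p) → M p r ≤ _ := fun r hr =>
      sum_norm_mul_pow_natAbs_le hs (exp_pos s).le (by simp) fun k hk hk0 =>
        max_self_inv_pow_natAbs_le (by linarith) hc.le hx hcx (hcx ▸ hp) hr hk0 (by
          rw [mem_Icc] at hk; omega)
    exact max_le (hM_le _ (Or.inl rfl)) (hM_le _ (Or.inr rfl))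
  obtain ⟨C, hC⟩ := (isBoundedUnder_of_eventually_le hM).bddAbove_range
  refine ⟨C, fun p _ z hz => ?_⟩
  calc _ ≤ M p ‖z‖ := norm_sum_mul_zpow_le _ _ _
    _ ≤ max (M p (1 + x p)) (M p (1 - x p)) := by
        rcases hz with h | h <;> rw [h]
        exacts [le_max_left _ _, le_max_right _ _]
    _ ≤ C := hC ⟨p, rfl⟩
end

section
/- Let A and A' be m×m complex matrices of the form A_{kℓ} = Σ_j a_k b_j /((q_k − p_j)(p_j − q_ℓ)) and A'_{kℓ} = Σ_j a'_k b'_j /((q_k − p_j)(p_j − q_ℓ)) with a'_j = a_j q_j^{−1}, b'_j = b_j p_j (all p_j, q_k distinct nonzero complex numbers). Let h solve (I − A) h = B, where B_k = Σ_j a_k b_j/(q_k − p_j), and suppose det(I−A) ≠ 0. Then 1 − Σ_{k=1}^m h_k/q_k = det(I − A')/det(I − A). -/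
/-!
Write `Δ = diag q`. The partial fraction identity
`p / ((q_k - p)(p - q_l)) = q_l / ((q_k - p)(p - q_l)) + 1 / (q_k - p)`
shows that `I - A' = Δ⁻¹ (I - A) Δ - (Δ⁻¹ B) 1ᵀ`, a rank-one perturbation of a conjugate of `I - A`.
Since `Δ⁻¹ (I - A) Δ` maps `Δ⁻¹ h` to `Δ⁻¹ B`, the matrix determinant lemma gives
`det (I - A') = det (I - A) * (1 - ∑ k, h_k / q_k)`.
-/

open Matrix

namespace Matrix

variable {n R K : Type*} [Fintype n] [DecidableEq n] [CommRing R] [Field K]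

theorem det_one_sub_vecMulVec (z w : n → R) : det (1 - vecMulVec z w) = 1 - w ⬝ᵥ z := by
  rw [sub_eq_add_neg, ← neg_vecMulVec, vecMulVec_eq Unit,
    det_one_add_replicateCol_mul_replicateRow, dotProduct_neg, ← sub_eq_add_neg]

theorem det_sub_vecMulVec_of_mulVec_eq {M : Matrix n n R} {u z : n → R} (hz : M *ᵥ z = u)
    (w : n → R) : det (M - vecMulVec u w) = det M * (1 - w ⬝ᵥ z) := by
  rw [← hz, ← mul_vecMulVec, ← mul_one M, mul_assoc, one_mul, ← mul_sub, det_mul,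
    det_one_sub_vecMulVec, mul_one]

theorem det_diagonal_inv_mul_mul_diagonal {d : n → K} (hd : ∀ i, d i ≠ 0)
    (M : Matrix n n K) : det (diagonal d⁻¹ * M * diagonal d) = det M := by
  have : ∏ i, d i ≠ 0 := Finset.prod_ne_zero_iff.2 fun i _ => hd i
  rw [det_mul, det_mul, det_diagonal, det_diagonal, mul_right_comm]
  simp only [Pi.inv_apply, Finset.prod_inv_distrib, inv_mul_cancel₀ this, one_mul]

theorem diagonal_inv_mul_mul_diagonal_mulVec_div {d : n → K} (hd : ∀ i, d i ≠ 0)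
    (M : Matrix n n K) (v : n → K) : (diagonal d⁻¹ * M * diagonal d) *ᵥ (v / d) = M *ᵥ v / d := by
  have : diagonal d *ᵥ (v / d) = v := by
    ext i
    simp [mulVec_diagonal, mul_div_cancel₀ _ (hd i)]
  ext i
  rw [← mulVec_mulVec, this, ← mulVec_mulVec, mulVec_diagonal, Pi.div_apply, Pi.inv_apply,
    inv_mul_eq_div]

end Matrix

section

variable {ι κ K : Type*} [Fintype ι] [Field K]

def telescopicMatrix (p : ι → K) (q a : κ → K) (b : ι → K) : Matrix κ κ K :=
  of fun k l => ∑ j, a k * b j / ((q k - p j) * (p j - q l))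

def telescopicVec (p : ι → K) (q a : κ → K) (b : ι → K) : κ → K :=
  fun k => ∑ j, a k * b j / (q k - p j)

variable {p : ι → K} {q : κ → K}

theorem telescopicMatrix_div_mul_apply (hq : ∀ k, q k ≠ 0) (hpq : ∀ j k, p j ≠ q k)
    (a : κ → K) (b : ι → K) (k l : κ) :
    telescopicMatrix p q (a / q) (b * p) k l
      = telescopicMatrix p q a b k l * q l / q k + telescopicVec p q a b k / q k := by
  simp only [telescopicMatrix, telescopicVec, of_apply, Finset.sum_mul, Finset.sum_div,
    ← Finset.sum_add_distrib, Pi.div_apply, Pi.mul_apply]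
  refine Finset.sum_congr rfl fun j _ => ?_
  have hqk := hq k
  have hqkp := sub_ne_zero.2 (hpq j k).symm
  have hpql := sub_ne_zero.2 (hpq j l)
  field_simp
  ring

variable [Fintype κ] [DecidableEq κ]

theorem one_sub_telescopicMatrix_div_mul (hq : ∀ k, q k ≠ 0) (hpq : ∀ j k, p j ≠ q k)
    (a : κ → K) (b : ι → K) :
    1 - telescopicMatrix p q (a / q) (b * p)
      = diagonal q⁻¹ * (1 - telescopicMatrix p q a b) * diagonal q
        - vecMulVec (telescopicVec p q a b / q) 1 := by
  ext k l
  simp only [Matrix.sub_apply, telescopicMatrix_div_mul_apply hq hpq, mul_diagonal, diagonal_mul,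
    vecMulVec_apply, Pi.inv_apply, Pi.div_apply, Pi.one_apply, mul_one]
  rcases eq_or_ne k l with rfl | hkl
  · field_simp [hq k]
    ring
  · simp only [one_apply_ne hkl]
    field_simp [hq k]
    ring

end

theorem telescopic_det_identity_general (mplus mminus : ℕ)
    (p : Fin mplus → ℂ) (q : Fin mminus → ℂ)
    (a : Fin mminus → ℂ) (b : Fin mplus → ℂ)
    (hq0 : ∀ k, q k ≠ 0)
    (hpq : ∀ j k, p j ≠ q k)
    (A A' : Matrix (Fin mminus) (Fin mminus) ℂ)
    (hA : A = Matrix.of fun k l => ∑ j, a k * b j / ((q k - p j) * (p j - q l)))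
    (hA' : A' = Matrix.of fun k l => ∑ j, (a k / q k) * (b j * p j) / ((q k - p j) * (p j - q l)))
    (B : Fin mminus → ℂ) (hB : B = fun k => ∑ j, a k * b j / (q k - p j))
    (h : Fin mminus → ℂ) (hh : (1 - A).mulVec h = B)
    (hdet : (1 - A).det ≠ 0) :
    1 - ∑ k, h k / q k = (1 - A').det / (1 - A).det := by
  change A = telescopicMatrix p q a b at hA
  change A' = telescopicMatrix p q (a / q) (b * p) at hA'
  change B = telescopicVec p q a b at hB
  have hconj : (diagonal q⁻¹ * (1 - A) * diagonal q) *ᵥ (h / q) = B / q := by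
    rw [diagonal_inv_mul_mul_diagonal_mulVec_div hq0, hh]
  have hdet' : (1 - A').det = (1 - A).det * (1 - ∑ k, h k / q k) := by
    rw [hA', one_sub_telescopicMatrix_div_mul hq0 hpq, ← hA, ← hB,
      det_sub_vecMulVec_of_mulVec_eq hconj, det_diagonal_inv_mul_mul_diagonal hq0, one_dotProduct]
    rfl
  rw [hdet', mul_div_cancel_left₀ _ hdet]

/-- Telescopic determinant identity: with `A_{kℓ} = Σ_j a_k b_j/((q_k−p_j)(p_j−q_ℓ))`,
`A'_{kℓ}` the same with `a'_j = a_j/q_j`, `b'_j = b_j p_j`, and `(I−A)h = B` where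
`B_k = Σ_j a_k b_j/(q_k−p_j)`, one has `1 − Σ_k h_k/q_k = det(I−A')/det(I−A)`. -/
theorem telescopic_det_identity (mplus mminus : ℕ)
    (p : Fin mplus → ℂ) (q : Fin mminus → ℂ)
    (a : Fin mminus → ℂ) (b : Fin mplus → ℂ)
    (hp0 : ∀ j, p j ≠ 0) (hq0 : ∀ k, q k ≠ 0)
    (hpinj : Function.Injective p) (hqinj : Function.Injective q)
    (hpq : ∀ j k, p j ≠ q k)
    (A A' : Matrix (Fin mminus) (Fin mminus) ℂ)
    (hA : A = Matrix.of fun k l => ∑ j, a k * b j / ((q k - p j) * (p j - q l)))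
    (hA' : A' = Matrix.of fun k l => ∑ j, (a k / q k) * (b j * p j) / ((q k - p j) * (p j - q l)))
    (B : Fin mminus → ℂ) (hB : B = fun k => ∑ j, a k * b j / (q k - p j))
    (h : Fin mminus → ℂ) (hh : (1 - A).mulVec h = B)
    (hdet : (1 - A).det ≠ 0) :
    1 - ∑ k, h k / q k = (1 - A').det / (1 - A).det :=
  telescopic_det_identity_general mplus mminus p q a b hq0 hpq A A' hA hA' B hB h hh hdet
end
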